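/- Let X and Y be irreducible shifts of finite type and let ϖ : Y → X be an unramified factor map (a continuous shift-commuting surjection whose fibers all have the same finite cardinality deg(ϖ)). Let Aut(Y/X, ϖ) = {φ ∈ Aut(Y) : ϖ ∘ φ = ϖ}. If some φ ∈ Aut(Y/X, ϖ) fixes a point y ∈ Y, then φ = id_Y. Consequently the natural action of Aut(Y/X, ϖ) on each fiber ϖ⁻¹(x) is free. -/

import Mathlib

open Function Set

/-- The shift map on bi-infinite sequences. -/
def shiftMap (A : Type*) : (ℤ → A) → (ℤ → A) := fun x i => x (i + 1)

/-- A (two-sided) subshift over an alphabet `A`: a closed, shift-invariant subset of the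
full shift `A^ℤ` on which the shift is onto. -/
structure Subshift (A : Type*) [TopologicalSpace A] where
  carrier : Set (ℤ → A)
  isClosed' : IsClosed carrier
  shift_mem' : ∀ x ∈ carrier, shiftMap A x ∈ carrier
  shift_surjOn' : ∀ x ∈ carrier, ∃ y ∈ carrier, shiftMap A y = x

/-- The shift map restricted to a subshift. -/
def Subshift.σ {A : Type*} [TopologicalSpace A] (X : Subshift A) : X.carrier → X.carrier :=
  fun x => ⟨shiftMap A x.1, X.shift_mem' x.1 x.2⟩

/-- `X` is a shift of finite type: membership is determined by a finite-window rule. -/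
def Subshift.IsSFT {A : Type*} [TopologicalSpace A] (X : Subshift A) : Prop :=
  ∃ (n : ℕ) (W : Set (Fin n → A)),
    X.carrier = {x | ∀ i : ℤ, (fun k : Fin n => x (i + (k.val : ℤ))) ∈ W}

/-- Irreducibility (= topological transitivity) of a subshift. -/
def Subshift.Irreducible {A : Type*} [TopologicalSpace A] (X : Subshift A) : Prop :=
  ∀ U V : Set X.carrier, IsOpen U → IsOpen V → U.Nonempty → V.Nonempty →
    ∃ n : ℕ, (X.σ^[n] '' U ∩ V).Nonempty

/-- A factor map between subshifts: a continuous, shift-commuting surjection. -/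
structure IsFactorMap {A B : Type*} [TopologicalSpace A] [TopologicalSpace B]
    (Y : Subshift B) (X : Subshift A) (ϖ : Y.carrier → X.carrier) : Prop where
  continuous : Continuous ϖ
  commutes : ∀ y, ϖ (Y.σ y) = X.σ (ϖ y)
  surjective : Function.Surjective ϖ

/-- An unramified (constant-to-one) factor map of degree `d`. -/
def IsUnramified {A B : Type*} [TopologicalSpace A] [TopologicalSpace B]
    (Y : Subshift B) (X : Subshift A) (ϖ : Y.carrier → X.carrier) (d : ℕ) : Prop :=
  IsFactorMap Y X ϖ ∧ ∀ x : X.carrier, (ϖ ⁻¹' {x}).Finite ∧ (ϖ ⁻¹' {x}).ncard = d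

/-- The relative automorphism group `Aut(Y/X, ϖ)`: shift-commuting self-homeomorphisms of `Y`
over `X`. -/
def relAut {A B : Type*} [TopologicalSpace A] [TopologicalSpace B]
    (Y : Subshift B) (X : Subshift A) (ϖ : Y.carrier → X.carrier) :
    Subgroup (Equiv.Perm Y.carrier) where
  carrier := {φ | Continuous φ ∧ Continuous (φ⁻¹ : Equiv.Perm Y.carrier) ∧
    (∀ y, φ (Y.σ y) = Y.σ (φ y)) ∧ ∀ y, ϖ (φ y) = ϖ y}
  one_mem' := ⟨by simpa using continuous_id, by simpa using continuous_id,
    fun _ => by simp, fun _ => by simp⟩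
  mul_mem' := by
    rintro φ ψ ⟨hc, hci, hcomm, hrel⟩ ⟨hc', hci', hcomm', hrel'⟩
    refine ⟨?_, ?_, fun y => ?_, fun y => ?_⟩
    · simpa [Equiv.Perm.coe_mul] using hc.comp hc'
    · simpa [mul_inv_rev, Equiv.Perm.coe_mul] using hci'.comp hci
    · simp [Equiv.Perm.mul_apply, hcomm, hcomm']
    · simp [Equiv.Perm.mul_apply, hrel, hrel']
  inv_mem' := by
    rintro φ ⟨hc, hci, hcomm, hrel⟩
    refine ⟨hci, by simpa using hc, fun y => φ.injective ?_, fun y => ?_⟩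
    · simp [hcomm, Equiv.apply_symm_apply]
    · conv_rhs => rw [← (show φ (φ⁻¹ y) = y from φ.apply_symm_apply y)]
      exact (hrel _).symm

/-- A pointed Galois factor of degree `d` over a pointed subshift `(X, x₀)`. -/
def IsPointedGaloisFactor {A B : Type*} [TopologicalSpace A] [TopologicalSpace B]
    (Y : Subshift B) (y₀ : Y.carrier) (X : Subshift A) (x₀ : X.carrier)
    (ϖ : Y.carrier → X.carrier) (d : ℕ) : Prop :=
  Y.IsSFT ∧ Y.Irreducible ∧ ϖ y₀ = x₀ ∧ IsUnramified Y X ϖ d ∧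
    Nat.card (relAut Y X ϖ) = d

/-- The full shift on an alphabet `A`. -/
def fullShift (A : Type*) [TopologicalSpace A] : Subshift A where
  carrier := Set.univ
  isClosed' := isClosed_univ
  shift_mem' := fun _ _ => Set.mem_univ _
  shift_surjOn' := fun x _ => ⟨fun i => x (i - 1), Set.mem_univ _, by
    funext i; simp [shiftMap]⟩

set_option linter.unusedSectionVars false
namespace Rigid

variable {C : Type*} [TopologicalSpace C] [DiscreteTopology C] [Finite C]

lemma zmem (S : Subshift C) : ∀ (k : ℤ) (x : ℤ → C), x ∈ S.carrier →
    (fun i => x (i + k)) ∈ S.carrier := by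
  have hfwd : ∀ (x : ℤ → C), x ∈ S.carrier → ∀ (k : ℤ), (fun i => x (i + k)) ∈ S.carrier →
      (fun i => x (i + (k+1))) ∈ S.carrier := by
    intro x hx k hk
    have := S.shift_mem' _ hk
    convert this using 1
    funext i; simp [shiftMap]; ring_nf
  have hbwd : ∀ (x : ℤ → C), x ∈ S.carrier → ∀ (k : ℤ), (fun i => x (i + k)) ∈ S.carrier →
      (fun i => x (i + (k-1))) ∈ S.carrier := by
    intro x hx k hk
    obtain ⟨y, hy, hsy⟩ := S.shift_surjOn' _ hk
    have hyv : y = fun i => x (i + (k-1)) := by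
      funext i
      have : shiftMap C y (i - 1) = x ((i-1) + k) := by rw [hsy]
      simp only [shiftMap] at this
      have h1 : i - 1 + 1 = i := by ring
      have h2 : i - 1 + k = i + (k - 1) := by ring
      rw [h1, h2] at this
      exact this
    rwa [hyv] at hy
  intro k x hx
  induction k using Int.induction_on with
  | zero => simpa using hx
  | succ n ih => exact hfwd x hx n ih
  | pred n ih => simpa [sub_eq_add_neg] using hbwd x hx (-n) ih

/-- Integer shift on a subshift. -/
def zs (S : Subshift C) (k : ℤ) (x : S.carrier) : S.carrier :=
  ⟨fun i => x.1 (i + k), zmem S k x.1 x.2⟩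

@[simp] lemma zs_apply (S : Subshift C) (k : ℤ) (x : S.carrier) (i : ℤ) :
    (zs S k x).1 i = x.1 (i + k) := rfl

lemma zs_zs (S : Subshift C) (a b : ℤ) (x : S.carrier) :
    zs S a (zs S b x) = zs S (a + b) x := by
  apply Subtype.ext; funext i; simp [zs, add_assoc]

@[simp] lemma zs_zero (S : Subshift C) (x : S.carrier) : zs S 0 x = x := by
  apply Subtype.ext; funext i; simp [zs]

lemma zs_injective (S : Subshift C) (k : ℤ) : Function.Injective (zs S k) := by
  intro x y h
  have : zs S (-k) (zs S k x) = zs S (-k) (zs S k y) := by rw [h]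
  simpa [zs_zs] using this

lemma sigma_eq_zs (S : Subshift C) (x : S.carrier) : S.σ x = zs S 1 x := rfl

lemma sigma_iter_eq_zs (S : Subshift C) (n : ℕ) (x : S.carrier) :
    S.σ^[n] x = zs S n x := by
  induction n with
  | zero => simp
  | succ n ih =>
    rw [Function.iterate_succ_apply', ih, sigma_eq_zs, zs_zs]
    norm_num [add_comm]

lemma continuous_zs (S : Subshift C) (k : ℤ) : Continuous (zs S k) := by
  apply Continuous.subtype_mk
  apply continuous_pi
  intro i
  exact (continuous_apply (i + k)).comp continuous_subtype_val

instance compactSpace (S : Subshift C) : CompactSpace S.carrier := by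
  have : CompactSpace (ℤ → C) := by infer_instance
  exact isCompact_iff_compactSpace.mp (S.isClosed'.isCompact)

lemma continuous_coord (S : Subshift C) (i : ℤ) :
    Continuous (fun x : S.carrier => x.1 i) :=
  (continuous_apply i).comp continuous_subtype_val

lemma isOpen_agree (S : Subshift C) (F : Finset ℤ) (g : ℤ → C) :
    IsOpen {x : S.carrier | ∀ i ∈ F, x.1 i = g i} := by
  have : {x : S.carrier | ∀ i ∈ F, x.1 i = g i} = ⋂ i ∈ F, {x : S.carrier | x.1 i = g i} := by
    ext x; simp
  rw [this]
  apply isOpen_biInter_finset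
  intro i _
  exact (isOpen_discrete {g i}).preimage (continuous_coord S i)

section FactorStuff

variable {A B : Type*} [TopologicalSpace A] [DiscreteTopology A] [Finite A]
    [TopologicalSpace B] [DiscreteTopology B] [Finite B]
    {X : Subshift A} {Y : Subshift B} {ϖ : Y.carrier → X.carrier}

/-- ϖ commutes with integer shifts. -/
lemma phi_zs (hcm : ∀ y, ϖ (Y.σ y) = X.σ (ϖ y)) (k : ℤ) (y : Y.carrier) :
    ϖ (zs Y k y) = zs X k (ϖ y) := by
  have h1 : ∀ w : Y.carrier, ϖ (zs Y 1 w) = zs X 1 (ϖ w) := by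
    intro w; rw [← sigma_eq_zs, ← sigma_eq_zs]; exact hcm w
  induction k using Int.induction_on with
  | zero => simp
  | succ n ih =>
    have : zs Y ((n:ℤ)+1) y = zs Y 1 (zs Y n y) := by rw [zs_zs]; ring_nf
    rw [this, h1, ih, zs_zs]; ring_nf
  | pred n ih =>
    apply zs_injective X 1
    rw [zs_zs]
    have e1 : (1 : ℤ) + (-(n:ℤ) - 1) = -n := by ring
    rw [e1, ← ih, ← h1, zs_zs, e1]

/-- Sliding block code radius. -/
lemma exists_radius (hc : Continuous ϖ) :
    ∃ r : ℕ, ∀ z w : Y.carrier, (∀ i : ℤ, i.natAbs ≤ r → z.1 i = w.1 i) →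
      (ϖ z).1 0 = (ϖ w).1 0 := by
  classical
  set e : Y.carrier → A := fun z => (ϖ z).1 0 with he
  have hec : Continuous e := (continuous_coord X 0).comp hc
  have H : ∀ z : Y.carrier, ∃ I : Finset ℤ, ∀ w : Y.carrier,
      (∀ i ∈ I, w.1 i = z.1 i) → e w = e z := by
    intro z
    have hopen : IsOpen (e ⁻¹' {e z}) := (isOpen_discrete _).preimage hec
    rw [isOpen_induced_iff] at hopen
    obtain ⟨O, hO, hOe⟩ := hopen
    have hzO : z.1 ∈ O := by
      have : z ∈ Subtype.val ⁻¹' O := by rw [hOe]; simp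
      exact this
    obtain ⟨I, u, hu, hsub⟩ := isOpen_pi_iff.mp hO z.1 hzO
    refine ⟨I, fun w hw => ?_⟩
    have hwO : w.1 ∈ O := by
      apply hsub
      intro i hi
      rw [hw i hi]
      exact (hu i hi).2
    have : w ∈ Subtype.val ⁻¹' O := hwO
    rw [hOe] at this
    simpa using this
  choose I hI using H
  have hcov : (Set.univ : Set Y.carrier) ⊆ ⋃ z : Y.carrier,
      {w : Y.carrier | ∀ i ∈ I z, w.1 i = z.1 i} := by
    intro z _
    exact Set.mem_iUnion.mpr ⟨z, fun i _ => rfl⟩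
  obtain ⟨t, ht⟩ := isCompact_univ.elim_finite_subcover
    (fun z : Y.carrier => {w : Y.carrier | ∀ i ∈ I z, w.1 i = z.1 i})
    (fun z => by
      have : {w : Y.carrier | ∀ i ∈ I z, w.1 i = z.1 i}
          = {w : Y.carrier | ∀ i ∈ I z, w.1 i = z.1 i} := rfl
      exact isOpen_agree Y (I z) z.1) hcov
  refine ⟨t.sup (fun z => (I z).sup Int.natAbs), fun z w hzw => ?_⟩
  have hz := ht (Set.mem_univ z)
  rw [Set.mem_iUnion₂] at hz
  obtain ⟨z₀, hz₀t, hz₀⟩ := hz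
  have hwz : ∀ i ∈ I z₀, w.1 i = z₀.1 i := by
    intro i hi
    rw [← hz₀ i hi]
    apply (hzw i _).symm
    calc i.natAbs ≤ (I z₀).sup Int.natAbs := Finset.le_sup hi
      _ ≤ t.sup (fun z => (I z).sup Int.natAbs) := Finset.le_sup (f := fun z => (I z).sup Int.natAbs) hz₀t
  exact ((hI z₀ z hz₀).trans (hI z₀ w hwz).symm)

/-- Shifted radius property. -/
lemma radius_at (hc : Continuous ϖ) (hcm : ∀ y, ϖ (Y.σ y) = X.σ (ϖ y)) :
    ∃ r : ℕ, ∀ (t : ℤ) (z w : Y.carrier), (∀ i : ℤ, (i - t).natAbs ≤ r → z.1 i = w.1 i) →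
      (ϖ z).1 t = (ϖ w).1 t := by
  obtain ⟨r, hr⟩ := exists_radius (hc := hc)
  refine ⟨r, fun t z w h => ?_⟩
  have h0 : (ϖ (zs Y t z)).1 0 = (ϖ (zs Y t w)).1 0 := by
    apply hr
    intro i hi
    simp only [zs_apply]
    apply h
    simpa using hi
  rw [phi_zs hcm, phi_zs hcm] at h0
  simpa using h0

end FactorStuff
section Splice

variable {A B : Type*} [TopologicalSpace A] [DiscreteTopology A] [Finite A]
    [TopologicalSpace B] [DiscreteTopology B] [Finite B]
    {X : Subshift A} {Y : Subshift B} {ϖ : Y.carrier → X.carrier}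

/-- Splicing two points of an SFT that agree on a window of length `n₀+1`. -/
lemma splice_mem {n₀ : ℕ} {W : Set (Fin n₀ → B)}
    (hsft : Y.carrier = {x | ∀ i : ℤ, (fun k : Fin n₀ => x (i + (k.val : ℤ))) ∈ W})
    (a : ℤ) {f g : ℤ → B} (hy : f ∈ Y.carrier) (hy' : g ∈ Y.carrier)
    (hag : ∀ i : ℤ, a ≤ i → i ≤ a + n₀ → f i = g i) :
    (fun i => if i < a then f i else g i) ∈ Y.carrier := by
  rw [hsft] at hy hy' ⊢
  intro i
  by_cases hc : a ≤ i
  · have : (fun k : Fin n₀ => (fun j => if j < a then f j else g j) (i + (k.val : ℤ)))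
        = fun k : Fin n₀ => g (i + (k.val : ℤ)) := by
      funext k
      have : ¬ (i + (k.val : ℤ) < a) := by
        have : (0:ℤ) ≤ (k.val : ℤ) := Int.natCast_nonneg _
        omega
      simp [this]
    rw [this]; exact hy' i
  · have : (fun k : Fin n₀ => (fun j => if j < a then f j else g j) (i + (k.val : ℤ)))
        = fun k : Fin n₀ => f (i + (k.val : ℤ)) := by
      funext k
      by_cases hk : i + (k.val : ℤ) < a
      · simp [hk]
      · have hkb : (k.val : ℤ) < (n₀ : ℤ) := by exact_mod_cast k.isLt
        have h1 : a ≤ i + (k.val : ℤ) := by omega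
        have h2 : i + (k.val : ℤ) ≤ a + n₀ := by omega
        simp [hk, (hag _ h1 h2).symm]
    rw [this]; exact hy i

/-- Image of a splice under the factor map, coordinatewise. -/
lemma splice_img {r : ℕ}
    (hr : ∀ (t : ℤ) (z w : Y.carrier), (∀ i : ℤ, (i - t).natAbs ≤ r → z.1 i = w.1 i) →
      (ϖ z).1 t = (ϖ w).1 t)
    (a : ℤ) (y y' s : Y.carrier)
    (hs : ∀ i, s.1 i = if i < a then y.1 i else y'.1 i)
    (hag : ∀ i : ℤ, (i - a).natAbs ≤ r → y.1 i = y'.1 i) (t : ℤ) :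
    (ϖ s).1 t = if t < a then (ϖ y).1 t else (ϖ y').1 t := by
  by_cases hc : t < a
  · rw [if_pos hc]
    apply hr
    intro i hi
    rw [hs i]
    by_cases hia : i < a
    · simp [hia]
    · have : (i - a).natAbs ≤ r := by omega
      simp [hia, (hag i this).symm]
  · rw [if_neg hc]
    apply hr
    intro i hi
    rw [hs i]
    by_cases hia : i < a
    · have : (i - a).natAbs ≤ r := by omega
      simp [hia, hag i this]
    · simp [hia]

end Splice
section Helpers

variable {γ : Type*}

lemma cofinal_pigeon [Finite γ] {Q : ℤ → Prop} (g : ℤ → γ)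
    (h : ∀ T : ℤ, ∃ τ, T ≤ τ ∧ Q τ) :
    ∃ v : γ, ∀ T : ℤ, ∃ τ, T ≤ τ ∧ Q τ ∧ g τ = v := by
  by_contra h'
  push_neg at h'
  choose Tf hTf using h'
  have hne : Nonempty γ := by
    obtain ⟨τ, _, _⟩ := h 0
    exact ⟨g τ⟩
  obtain ⟨v₀, hv₀⟩ := Finite.exists_max Tf
  obtain ⟨τ, hτ1, hτ2⟩ := h (Tf v₀)
  exact hTf (g τ) τ (le_trans (hv₀ (g τ)) hτ1) hτ2 rfl

lemma exceed_card {α : Type*} {s : Set α} (hs : s.Finite) {n : ℕ} (f : Fin (n+1) → α)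
    (hf : ∀ j, f j ∈ s) (hinj : ∀ j k : Fin (n+1), j < k → f j ≠ f k)
    (hcard : s.ncard = n) : False := by
  classical
  have hinj' : Function.Injective f := by
    intro j k hjk
    rcases lt_trichotomy j k with h | h | h
    · exact absurd hjk (hinj j k h)
    · exact h
    · exact absurd hjk.symm (hinj k j h)
  have h1 : (Finset.univ.image f).card = n + 1 := by
    rw [Finset.card_image_of_injective _ hinj', Finset.card_univ, Fintype.card_fin]
  have h2 : Finset.univ.image f ⊆ hs.toFinset := by
    intro a ha
    obtain ⟨j, _, rfl⟩ := Finset.mem_image.mp ha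
    exact hs.mem_toFinset.mpr (hf j)
  have h3 := Finset.card_le_card h2
  rw [h1] at h3
  rw [Set.ncard_eq_toFinset_card s hs] at hcard
  omega

lemma chain_subset {S : ℕ → Set γ} (hanti : ∀ n, S (n+1) ⊆ S n) :
    ∀ m n : ℕ, m ≤ n → S n ⊆ S m := by
  intro m n hmn
  induction n with
  | zero => have : m = 0 := by omega
            subst this; exact fun _ h => h
  | succ n ih =>
    rcases Nat.lt_or_ge m (n+1) with h | h
    · exact fun a ha => ih (by omega) (hanti n ha)
    · have : m = n + 1 := by omega
      subst this; exact fun _ h => h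

lemma chain_stab {S : ℕ → Set γ} (hfin : ∀ n, (S n).Finite) (hanti : ∀ n, S (n+1) ⊆ S n) :
    ∃ K, ∀ n, K ≤ n → S n = S K := by
  set f : ℕ → ℕ := fun n => (S n).ncard with hf
  have hrange : (Set.range f).Nonempty := ⟨f 0, ⟨0, rfl⟩⟩
  obtain ⟨K, hK⟩ := Nat.sInf_mem hrange
  refine ⟨K, fun n hn => ?_⟩
  have hsub : S n ⊆ S K := chain_subset hanti K n hn
  have h1 : f n ≥ sInf (Set.range f) := Nat.sInf_le ⟨n, rfl⟩
  rw [← hK] at h1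
  exact Set.eq_of_subset_of_ncard_le hsub h1 (hfin K)

end Helpers

section Mask

variable {B : Type*}

/-- Restriction of a sequence to a window, as a masked total function. -/
def mask (a b : ℤ) (f : ℤ → B) : ℤ → Option B :=
  fun i => if a ≤ i ∧ i ≤ b then some (f i) else none

lemma mask_eq_iff {a b : ℤ} {f g : ℤ → B} :
    mask a b f = mask a b g ↔ ∀ i, a ≤ i → i ≤ b → f i = g i := by
  constructor
  · intro h i h1 h2
    have := congrFun h i
    simp only [mask, if_pos (And.intro h1 h2)] at this
    exact Option.some_injective _ this
  · intro h
    funext i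
    by_cases hc : a ≤ i ∧ i ≤ b
    · simp [mask, hc, h i hc.1 hc.2]
    · simp [mask, hc]

lemma finite_maskImage [Finite B] (a b : ℤ) (s : Set (ℤ → B)) :
    ((fun f => mask a b f) '' s).Finite := by
  classical
  haveI := Fintype.ofFinite B
  have hsub : ((fun f => mask a b f) '' s) ⊆
      {h : ℤ → Option B | ∀ i, i ∉ Finset.Icc a b → h i = none} := by
    rintro _ ⟨f, _, rfl⟩ i hi
    have : ¬ (a ≤ i ∧ i ≤ b) := by
      intro hc; exact hi (Finset.mem_Icc.mpr hc)
    simp [mask, this]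
  apply Set.Finite.subset _ hsub
  haveI : Fintype {j : ℤ // j ∈ Finset.Icc a b} := FinsetCoe.fintype _
  apply Set.Finite.of_finite_image
    (f := fun h => fun i : {j : ℤ // j ∈ Finset.Icc a b} => h i.1)
  · apply Set.toFinite
  · intro h1 h1m h2 h2m heq
    funext i
    by_cases hi : i ∈ Finset.Icc a b
    · exact congrFun heq ⟨i, hi⟩
    · rw [h1m i hi, h2m i hi]

/-- Shifting masked patterns. -/
def maskShift (t : ℤ) (h : ℤ → Option B) : ℤ → Option B := fun i => h (i - t)

lemma maskShift_injective (t : ℤ) : Function.Injective (maskShift (B := B) t) := by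
  intro h1 h2 he
  funext i
  have := congrFun he (i + t)
  simpa [maskShift] using this

lemma mask_shift_eq (a b t : ℤ) (f : ℤ → B) :
    mask (a + t) (b + t) f = maskShift t (mask a b (fun i => f (i + t))) := by
  funext i
  simp only [mask, maskShift]
  have hiff : (a + t ≤ i ∧ i ≤ b + t) ↔ (a ≤ i - t ∧ i - t ≤ b) := by omega
  by_cases hc : a + t ≤ i ∧ i ≤ b + t
  · rw [if_pos hc, if_pos (hiff.mp hc)]
    have h2 : i - t + t = i := by ring
    rw [h2]
  · rw [if_neg hc, if_neg (fun hx => hc (hiff.mpr hx))]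

/-- Truncation of masked patterns. -/
def trunc (a b : ℤ) (h : ℤ → Option B) : ℤ → Option B :=
  fun i => if a ≤ i ∧ i ≤ b then h i else none

lemma trunc_mask {a b a' b' : ℤ} (h1 : a' ≤ a) (h2 : b ≤ b') (f : ℤ → B) :
    trunc a b (mask a' b' f) = mask a b f := by
  funext i
  simp only [trunc, mask]
  by_cases hc : a ≤ i ∧ i ≤ b
  · have hc' : a' ≤ i ∧ i ≤ b' := by omega
    simp [hc, hc']
  · simp [hc]

end Mask
section Transitive

variable {A : Type*} [TopologicalSpace A] [DiscreteTopology A] [Finite A]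


lemma isOpen_cyl {X : Subshift A} (K : ℕ) (p : ℤ)
    (w : {j : ℤ // j ∈ Finset.Icc (-(K:ℤ)) (K:ℤ)} → A) :
    IsOpen {x : X.carrier | ∀ j : {j : ℤ // j ∈ Finset.Icc (-(K:ℤ)) (K:ℤ)},
      x.1 (j.1 + p) = w j} := by
  have he : {x : X.carrier | ∀ j : {j : ℤ // j ∈ Finset.Icc (-(K:ℤ)) (K:ℤ)},
      x.1 (j.1 + p) = w j}
      = ⋂ j : {j : ℤ // j ∈ Finset.Icc (-(K:ℤ)) (K:ℤ)},
        (fun x : X.carrier => x.1 (j.1 + p)) ⁻¹' {w j} := by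
    ext x
    simp only [Set.mem_iInter, Set.mem_setOf_eq, Set.mem_preimage, Set.mem_singleton_iff]
  rw [he]
  exact isOpen_iInter_of_finite fun j =>
    (isOpen_discrete _).preimage ((continuous_apply _).comp continuous_subtype_val)

lemma exists_transitive {X : Subshift A} (hXirr : X.Irreducible) (hne : Nonempty X.carrier) :
    ∃ xh : X.carrier, ∀ (x0 : X.carrier) (K : ℕ) (T : ℤ),
      (∃ τ : ℤ, T ≤ τ ∧ ∀ i : ℤ, i.natAbs ≤ K → xh.1 (i + τ) = x0.1 i) ∧
      (∃ τ : ℤ, τ ≤ T ∧ ∀ i : ℤ, i.natAbs ≤ K → xh.1 (i + τ) = x0.1 i) := by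
  classical
  haveI := Fintype.ofFinite A
  haveI : BaireSpace X.carrier := BaireSpace.of_t2Space_locallyCompactSpace
  -- index type: realizable words with a time bound and a direction
  let Wd : Type _ := Σ K : ℕ, ({j : ℤ // j ∈ Finset.Icc (-(K:ℤ)) (K:ℤ)} → A)
  let ι : Type _ := {q : Wd × ℤ × Bool // ∃ x0 : X.carrier, ∀ j, x0.1 j.1 = q.1.2 j}
  haveI : Countable Wd := by
    haveI : ∀ K : ℕ, Finite ({j : ℤ // j ∈ Finset.Icc (-(K:ℤ)) (K:ℤ)} → A) := by
      intro K; infer_instance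
    infer_instance
  haveI : Countable ι := Subtype.countable
  let D : ι → Set X.carrier := fun q =>
    {x : X.carrier | ∃ τ : ℤ, (if q.1.2.2 then q.1.2.1 ≤ τ else τ ≤ q.1.2.1) ∧
      ∀ j : {j : ℤ // j ∈ Finset.Icc (-(q.1.1.1:ℤ)) (q.1.1.1:ℤ)}, x.1 (j.1 + τ) = q.1.1.2 j}
  have hopen : ∀ q, IsOpen (D q) := by
    intro q
    have he : D q = ⋃ τ : {τ : ℤ // if q.1.2.2 then q.1.2.1 ≤ τ else τ ≤ q.1.2.1},
        {x : X.carrier | ∀ j : {j : ℤ // j ∈ Finset.Icc (-(q.1.1.1:ℤ)) (q.1.1.1:ℤ)},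
          x.1 (j.1 + τ.1) = q.1.1.2 j} := by
      ext x
      simp only [Set.mem_iUnion, Set.mem_setOf_eq, Subtype.exists, D]
      constructor
      · rintro ⟨τ, h1, h2⟩; exact ⟨τ, h1, h2⟩
      · rintro ⟨τ, h1, h2⟩; exact ⟨τ, h1, h2⟩
    rw [he]
    exact isOpen_iUnion fun τ => isOpen_cyl _ _ _
  have hdense : ∀ q, Dense (D q) := by
    intro q
    rw [dense_iff_inter_open]
    rintro V hV hVne
    obtain ⟨x0, hx0⟩ := q.2
    set K := q.1.1.1 with hK
    set w := q.1.1.2 with hw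
    set T := q.1.2.1 with hT
    -- the cylinder at a fixed position p
    have hcyl : ∀ p : ℤ, ∃ u : X.carrier,
        ∀ j : {j : ℤ // j ∈ Finset.Icc (-(K:ℤ)) (K:ℤ)}, u.1 (j.1 + p) = w j := by
      intro p
      refine ⟨zs X (-p) x0, fun j => ?_⟩
      rw [zs_apply]
      rw [show j.1 + p + -p = j.1 by ring]
      exact hx0 j
    by_cases hdir : q.1.2.2
    · -- occurrences to the right : apply irreducibility with (V, cylinder)
      set U : Set X.carrier := {x : X.carrier |
        ∀ j : {j : ℤ // j ∈ Finset.Icc (-(K:ℤ)) (K:ℤ)}, x.1 (j.1 + T) = w j} with hU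
      have hUopen : IsOpen U := isOpen_cyl _ _ _
      obtain ⟨u, hu⟩ := hcyl T
      obtain ⟨n, x', hx'⟩ := hXirr V U hV hUopen hVne ⟨u, hu⟩
      obtain ⟨⟨v, hvV, hvx'⟩, hx'U⟩ := hx'
      refine ⟨v, hvV, ⟨T + n, ?_, fun j => ?_⟩⟩
      · rw [if_pos hdir]; omega
      · have : x'.1 (j.1 + T) = w j := hx'U j
        rw [← hvx', sigma_iter_eq_zs, zs_apply] at this
        rw [show j.1 + (T + n) = j.1 + T + n by ring]
        exact this
    · -- occurrences to the left : apply irreducibility with (cylinder, V)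
      set U : Set X.carrier := {x : X.carrier |
        ∀ j : {j : ℤ // j ∈ Finset.Icc (-(K:ℤ)) (K:ℤ)}, x.1 (j.1 + T) = w j} with hU
      have hUopen : IsOpen U := isOpen_cyl _ _ _
      obtain ⟨u, hu⟩ := hcyl T
      obtain ⟨n, x', hx'⟩ := hXirr U V hUopen hV ⟨u, hu⟩ hVne
      obtain ⟨⟨v, hvU, hvx'⟩, hx'V⟩ := hx'
      refine ⟨x', hx'V, ⟨T - n, ?_, fun j => ?_⟩⟩
      · rw [if_neg hdir]; omega
      · have : v.1 (j.1 + T) = w j := hvU j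
        rw [← hvx', sigma_iter_eq_zs, zs_apply]
        rw [show j.1 + (T - n) + n = j.1 + T by ring]
        exact this
  have hD : Dense (⋂ q, D q) := dense_iInter_of_isOpen hopen hdense
  obtain ⟨xh, hxh⟩ := hD.nonempty
  refine ⟨xh, fun x0 K T => ?_⟩
  constructor
  · have hmem : xh ∈ D ⟨⟨⟨K, fun j => x0.1 j.1⟩, T, true⟩, ⟨x0, fun j => rfl⟩⟩ :=
      Set.mem_iInter.mp hxh _
    obtain ⟨τ, h1, h2⟩ := hmem
    rw [if_pos rfl] at h1
    refine ⟨τ, h1, fun i hi => ?_⟩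
    have hj : i ∈ Finset.Icc (-(K:ℤ)) (K:ℤ) := by
      rw [Finset.mem_Icc]; omega
    exact h2 ⟨i, hj⟩
  · have hmem : xh ∈ D ⟨⟨⟨K, fun j => x0.1 j.1⟩, T, false⟩, ⟨x0, fun j => rfl⟩⟩ :=
      Set.mem_iInter.mp hxh _
    obtain ⟨τ, h1, h2⟩ := hmem
    rw [if_neg (by simp : ¬ (false = true))] at h1
    refine ⟨τ, h1, fun i hi => ?_⟩
    have hj : i ∈ Finset.Icc (-(K:ℤ)) (K:ℤ) := by
      rw [Finset.mem_Icc]; omega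
    exact h2 ⟨i, hj⟩

end Transitive
section Counting

variable {A B : Type*} [TopologicalSpace A] [DiscreteTopology A] [Finite A]
    [TopologicalSpace B] [DiscreteTopology B] [Finite B]
    {X : Subshift A} {Y : Subshift B} {ϖ : Y.carrier → X.carrier}

lemma fib_shift (hcm : ∀ y, ϖ (Y.σ y) = X.σ (ϖ y)) (t : ℤ) (x : X.carrier) :
    ϖ ⁻¹' {zs X t x} = zs Y t '' (ϖ ⁻¹' {x}) := by
  ext y
  simp only [Set.mem_preimage, Set.mem_singleton_iff, Set.mem_image]
  constructor
  · intro h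
    refine ⟨zs Y (-t) y, ?_, ?_⟩
    · show ϖ (zs Y (-t) y) = x
      rw [phi_zs hcm, h, zs_zs]
      simp
    · rw [zs_zs]; simp
  · rintro ⟨y', hy', rfl⟩
    rw [phi_zs hcm]
    have : ϖ y' = x := hy'
    rw [this]

lemma pimg_finite (a b : ℤ) (s : Set Y.carrier) :
    ((fun y : Y.carrier => mask a b y.1) '' s).Finite := by
  have he : (fun y : Y.carrier => mask a b y.1) '' s
      = (fun f => mask a b f) '' (Subtype.val '' s) := by
    rw [Set.image_image]
  rw [he]
  exact finite_maskImage a b _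

lemma cnt_shift (hcm : ∀ y, ϖ (Y.σ y) = X.σ (ϖ y)) (a b t : ℤ) (x : X.carrier) :
    ((fun y : Y.carrier => mask (a + t) (b + t) y.1) '' (ϖ ⁻¹' {x})).ncard
      = ((fun y : Y.carrier => mask a b y.1) '' (ϖ ⁻¹' {zs X t x})).ncard := by
  have h1 : (fun y : Y.carrier => mask (a + t) (b + t) y.1)
      = (maskShift t) ∘ (fun y : Y.carrier => mask a b (zs Y t y).1) := by
    funext y
    exact mask_shift_eq a b t y.1
  rw [h1, Set.image_comp, Set.ncard_image_of_injective _ (maskShift_injective t),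
      fib_shift hcm, Set.image_image]

lemma cnt_mono {a b a' b' : ℤ} (h1 : a' ≤ a) (h2 : b ≤ b') (s : Set Y.carrier)
    (hs : s.Finite) :
    ((fun y : Y.carrier => mask a b y.1) '' s).ncard
      ≤ ((fun y : Y.carrier => mask a' b' y.1) '' s).ncard := by
  have he : (fun y : Y.carrier => mask a b y.1) '' s
      = (trunc a b) '' ((fun y : Y.carrier => mask a' b' y.1) '' s) := by
    rw [Set.image_image]
    apply Set.image_congr
    intro y _
    exact (trunc_mask h1 h2 y.1).symm
  rw [he]
  exact Set.ncard_image_le (pimg_finite a' b' s)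

end Counting
section Magic

variable {A B : Type*} [TopologicalSpace A] [DiscreteTopology A] [Finite A]
    [TopologicalSpace B] [DiscreteTopology B] [Finite B]
    {X : Subshift A} {Y : Subshift B}

/-- The fiber of the factor map. -/
def fib (ϖ : Y.carrier → X.carrier) (x : X.carrier) : Set Y.carrier := ϖ ⁻¹' {x}

/-- Number of distinct window-patterns appearing in a fiber. -/
noncomputable def cnt (ϖ : Y.carrier → X.carrier) (a b : ℤ) (x : X.carrier) : ℕ :=
  ((fun y : Y.carrier => mask a b y.1) '' fib ϖ x).ncard

/-- Word-level approximate fiber pattern sets. -/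
def Tap (ϖ : Y.carrier → X.carrier) (L K : ℕ) (xs : X.carrier) : Set (ℤ → Option B) :=
  (fun y : Y.carrier => mask 0 ((L:ℤ) - 1) y.1) ''
    {y : Y.carrier | ∀ i : ℤ, i.natAbs ≤ K → (ϖ y).1 i = xs.1 i}

lemma Tap_finite (ϖ : Y.carrier → X.carrier) (L K : ℕ) (xs : X.carrier) :
    (Tap ϖ L K xs).Finite := pimg_finite _ _ _

lemma Tap_anti (ϖ : Y.carrier → X.carrier) (L : ℕ) (xs : X.carrier) (K : ℕ) :
    Tap ϖ L (K+1) xs ⊆ Tap ϖ L K xs := by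
  apply Set.image_mono
  intro y hy i hi
  exact hy i (by omega)

lemma cnt_window_shift {ϖ : Y.carrier → X.carrier}
    (hcm : ∀ y, ϖ (Y.σ y) = X.σ (ϖ y)) (L : ℕ) (a : ℤ) (x : X.carrier) :
    cnt ϖ a (a + L - 1) x = cnt ϖ 0 ((L:ℤ) - 1) (zs X a x) := by
  have h := cnt_shift (X := X) (Y := Y) hcm 0 ((L:ℤ)-1) a x
  rw [zero_add] at h
  rw [show (L:ℤ) - 1 + a = a + L - 1 from by ring] at h
  exact h

lemma Tap_stab {ϖ : Y.carrier → X.carrier} (hc : Continuous ϖ) (L : ℕ) (xs : X.carrier) :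
    ∃ K₀ : ℕ, Tap ϖ L K₀ xs = (fun y : Y.carrier => mask 0 ((L:ℤ)-1) y.1) '' fib ϖ xs := by
  classical
  obtain ⟨K₀, hK₀⟩ := chain_stab (fun K => Tap_finite ϖ L K xs) (Tap_anti ϖ L xs)
  refine ⟨K₀, ?_⟩
  apply Set.Subset.antisymm
  · -- hard direction, compactness
    intro g hg
    -- the closed sets
    set C : ℕ → Set Y.carrier := fun n =>
      {y : Y.carrier | (∀ i : ℤ, 0 ≤ i → i ≤ (L:ℤ)-1 → some (y.1 i) = g i) ∧
        ∀ i : ℤ, i.natAbs ≤ n → (ϖ y).1 i = xs.1 i} with hC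
    have hCclosed : ∀ n, IsClosed (C n) := by
      intro n
      have hCn : C n = {y : Y.carrier | ∀ i : ℤ, 0 ≤ i → i ≤ (L:ℤ)-1 → some (y.1 i) = g i}
          ∩ {y : Y.carrier | ∀ i : ℤ, i.natAbs ≤ n → (ϖ y).1 i = xs.1 i} := rfl
      rw [hCn]
      apply IsClosed.inter
      · have : {y : Y.carrier | ∀ i : ℤ, 0 ≤ i → i ≤ (L:ℤ)-1 → some (y.1 i) = g i}
            = ⋂ i : ℤ, {y : Y.carrier | 0 ≤ i → i ≤ (L:ℤ)-1 → some (y.1 i) = g i} := by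
          ext y; simp [Set.mem_iInter]
        rw [this]
        apply isClosed_iInter
        intro i
        by_cases hi : 0 ≤ i ∧ i ≤ (L:ℤ)-1
        · have he : {y : Y.carrier | 0 ≤ i → i ≤ (L:ℤ)-1 → some (y.1 i) = g i}
              = (fun y : Y.carrier => y.1 i) ⁻¹' {b | some b = g i} := by
            ext y; simp [hi.1, hi.2]
          rw [he]
          exact (isClosed_discrete _).preimage (continuous_coord Y i)
        · have he : {y : Y.carrier | 0 ≤ i → i ≤ (L:ℤ)-1 → some (y.1 i) = g i}
              = Set.univ := by
            ext y; simp only [Set.mem_setOf_eq, Set.mem_univ, iff_true]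
            intro h1 h2; exact absurd ⟨h1, h2⟩ hi
          rw [he]; exact isClosed_univ
      · have : {y : Y.carrier | ∀ i : ℤ, i.natAbs ≤ n → (ϖ y).1 i = xs.1 i}
            = ⋂ i : ℤ, {y : Y.carrier | i.natAbs ≤ n → (ϖ y).1 i = xs.1 i} := by
          ext y; simp [Set.mem_iInter]
        rw [this]
        apply isClosed_iInter
        intro i
        by_cases hi : i.natAbs ≤ n
        · have he : {y : Y.carrier | i.natAbs ≤ n → (ϖ y).1 i = xs.1 i}
              = (fun y : Y.carrier => (ϖ y).1 i) ⁻¹' {xs.1 i} := by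
            ext y; simp [hi]
          rw [he]
          exact (isClosed_discrete _).preimage ((continuous_coord X i).comp hc)
        · have he : {y : Y.carrier | i.natAbs ≤ n → (ϖ y).1 i = xs.1 i} = Set.univ := by
            ext y; simp only [Set.mem_setOf_eq, Set.mem_univ, iff_true]
            intro h1; exact absurd h1 hi
          rw [he]; exact isClosed_univ
    have hCne : ∀ n, (C n).Nonempty := by
      intro n
      have hsub : Tap ϖ L (max n K₀) xs ⊆ Tap ϖ L n xs :=
        chain_subset (S := fun K => Tap ϖ L K xs) (Tap_anti ϖ L xs) n (max n K₀)
          (le_max_left _ _)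
      have : g ∈ Tap ϖ L n xs := by
        apply hsub
        rw [hK₀ (max n K₀) (le_max_right _ _)]
        exact hg
      obtain ⟨y, hy, hmask⟩ := this
      refine ⟨y, ⟨fun i h1 h2 => ?_, hy⟩⟩
      have := congrFun hmask i
      simp only [mask, if_pos (And.intro h1 h2)] at this
      exact this
    have hCanti : ∀ n, C (n+1) ⊆ C n := by
      intro n y hy
      exact ⟨hy.1, fun i hi => hy.2 i (by omega)⟩
    have hCint : (⋂ n, C n).Nonempty := by
      apply IsCompact.nonempty_iInter_of_sequence_nonempty_isCompact_isClosed C hCanti hCne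
      · exact (hCclosed 0).isCompact
      · exact hCclosed
    obtain ⟨y, hy⟩ := hCint
    have hy' : ∀ n, y ∈ C n := Set.mem_iInter.mp hy
    have hϖy : ϖ y = xs := by
      apply Subtype.ext
      funext i
      exact (hy' i.natAbs).2 i le_rfl
    refine ⟨y, hϖy, ?_⟩
    -- mask equals g
    obtain ⟨y', _, hgm⟩ := hg
    funext i
    by_cases hi : 0 ≤ i ∧ i ≤ (L:ℤ)-1
    · have h1 := (hy' 0).1 i hi.1 hi.2
      simp only [mask, if_pos hi]
      exact h1
    · simp only [mask, if_neg hi]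
      rw [← hgm]
      simp only [mask, if_neg hi]
  · -- easy direction
    apply Set.image_mono
    intro y hy i _
    have : ϖ y = xs := hy
    rw [this]

/-- Every pattern set over an occurrence of the magic word equals the shifted magic set. -/
lemma factA {ϖ : Y.carrier → X.carrier}
    (hcm : ∀ y, ϖ (Y.σ y) = X.σ (ϖ y)) (L K₀ : ℕ) (xs : X.carrier)
    (hTap : Tap ϖ L K₀ xs = (fun y : Y.carrier => mask 0 ((L:ℤ)-1) y.1) '' fib ϖ xs)
    (hlow : ∀ (a : ℤ) (x : X.carrier), (Tap ϖ L K₀ xs).ncard ≤ cnt ϖ a (a + L - 1) x)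
    (x' : X.carrier) (τ : ℤ) (hocc : ∀ i : ℤ, i.natAbs ≤ K₀ → x'.1 (i + τ) = xs.1 i) :
    (fun y : Y.carrier => mask τ (τ + L - 1) y.1) '' fib ϖ x'
      = maskShift τ '' Tap ϖ L K₀ xs := by
  apply Set.eq_of_subset_of_ncard_le
  · rintro _ ⟨y, hy, rfl⟩
    have hmem : zs Y τ y ∈ {y : Y.carrier | ∀ i : ℤ, i.natAbs ≤ K₀ → (ϖ y).1 i = xs.1 i} := by
      intro i hi
      rw [phi_zs hcm, zs_apply]
      have : ϖ y = x' := hy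
      rw [this]
      exact hocc i hi
    refine ⟨mask 0 ((L:ℤ)-1) (zs Y τ y).1, ⟨zs Y τ y, hmem, rfl⟩, ?_⟩
    have em := mask_shift_eq 0 ((L:ℤ)-1) τ y.1
    rw [zero_add, show (L:ℤ) - 1 + τ = τ + L - 1 from by ring] at em
    exact (em.symm : maskShift τ (mask 0 ((L:ℤ)-1) (zs Y τ y).1) = _)
  · rw [Set.ncard_image_of_injective _ (maskShift_injective τ)]
    exact hlow τ x'
  · exact (Tap_finite ϖ L K₀ xs).image _

lemma factA_realize {ϖ : Y.carrier → X.carrier}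
    (hcm : ∀ y, ϖ (Y.σ y) = X.σ (ϖ y)) (L K₀ : ℕ) (xs : X.carrier)
    (hTap : Tap ϖ L K₀ xs = (fun y : Y.carrier => mask 0 ((L:ℤ)-1) y.1) '' fib ϖ xs)
    (hlow : ∀ (a : ℤ) (x : X.carrier), (Tap ϖ L K₀ xs).ncard ≤ cnt ϖ a (a + L - 1) x)
    (x' : X.carrier) (τ : ℤ) (hocc : ∀ i : ℤ, i.natAbs ≤ K₀ → x'.1 (i + τ) = xs.1 i)
    (y₀ : Y.carrier) (hy₀ : ∀ i : ℤ, i.natAbs ≤ K₀ → (ϖ y₀).1 i = xs.1 i) :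
    ∃ z : Y.carrier, ϖ z = x' ∧ ∀ j : ℤ, 0 ≤ j → j ≤ (L:ℤ) - 1 → z.1 (j + τ) = y₀.1 j := by
  have hmem : maskShift τ (mask 0 ((L:ℤ)-1) y₀.1) ∈ maskShift τ '' Tap ϖ L K₀ xs :=
    ⟨_, ⟨y₀, hy₀, rfl⟩, rfl⟩
  rw [← factA hcm L K₀ xs hTap hlow x' τ hocc] at hmem
  obtain ⟨z, hz, hzm⟩ := hmem
  refine ⟨z, hz, fun j h1 h2 => ?_⟩
  have := congrFun hzm (j + τ)
  simp only [mask, maskShift, if_pos (show τ ≤ j + τ ∧ j + τ ≤ τ + L - 1 from by omega),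
    add_sub_cancel_right] at this
  rw [if_pos (show (0:ℤ) ≤ j ∧ j ≤ (L:ℤ)-1 from ⟨h1, h2⟩)] at this
  exact Option.some_injective _ this

end Magic
section Key

variable {A B : Type*} [TopologicalSpace A] [DiscreteTopology A] [Finite A]
    [TopologicalSpace B] [DiscreteTopology B] [Finite B]
    {X : Subshift A} {Y : Subshift B} {ϖ : Y.carrier → X.carrier}

set_option maxHeartbeats 2000000 in
lemma key_sep (hXirr : X.Irreducible)
    {n₀ : ℕ} {W : Set (Fin n₀ → B)}
    (hsft : Y.carrier = {x | ∀ i : ℤ, (fun k : Fin n₀ => x (i + (k.val : ℤ))) ∈ W})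
    (hc : Continuous ϖ) (hcm : ∀ y, ϖ (Y.σ y) = X.σ (ϖ y)) (hsurj : Function.Surjective ϖ)
    (d : ℕ) (hfib : ∀ x : X.carrier, (ϖ ⁻¹' {x}).Finite ∧ (ϖ ⁻¹' {x}).ncard = d)
    (hne : Nonempty Y.carrier) :
    ∃ N : ℕ, ∀ z w : Y.carrier, ϖ z = ϖ w →
      (∀ i : ℤ, i.natAbs ≤ N → z.1 i = w.1 i) → z = w := by
  classical
  obtain ⟨r, hr⟩ := radius_at hc hcm
  haveI hXne : Nonempty X.carrier := ⟨ϖ (Classical.arbitrary _)⟩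
  have hfin : ∀ x, (fib ϖ x).Finite := fun x => (hfib x).1
  have hcard : ∀ x, (fib ϖ x).ncard = d := fun x => (hfib x).2
  have hcnt_le : ∀ (a b : ℤ) (x), cnt ϖ a b x ≤ d := by
    intro a b x
    rw [← hcard x]
    exact Set.ncard_image_le (hfin x)
  -- minimal window count
  set qv : ℕ → ℕ := fun ℓ => sInf {n | ∃ x : X.carrier, cnt ϖ 0 ((ℓ:ℤ) - 1) x = n}
    with hqvdef
  have hqv_ex : ∀ ℓ : ℕ, ∃ x : X.carrier, cnt ϖ 0 ((ℓ:ℤ)-1) x = qv ℓ := by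
    intro ℓ
    have hne' : {n | ∃ x : X.carrier, cnt ϖ 0 ((ℓ:ℤ)-1) x = n}.Nonempty :=
      ⟨cnt ϖ 0 ((ℓ:ℤ)-1) (Classical.arbitrary X.carrier),
        ⟨Classical.arbitrary X.carrier, rfl⟩⟩
    exact Nat.sInf_mem hne'
  have hqv_le : ∀ (ℓ : ℕ) (x : X.carrier), qv ℓ ≤ cnt ϖ 0 ((ℓ:ℤ)-1) x := fun ℓ x =>
    Nat.sInf_le ⟨x, rfl⟩
  have hqv_low : ∀ (ℓ : ℕ) (a : ℤ) (x : X.carrier), qv ℓ ≤ cnt ϖ a (a + ℓ - 1) x := by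
    intro ℓ a x
    rw [cnt_window_shift hcm]
    exact hqv_le ℓ _
  have hqv_d : ∀ ℓ, qv ℓ ≤ d := by
    intro ℓ
    obtain ⟨x, hx⟩ := hqv_ex ℓ
    rw [← hx]; exact hcnt_le _ _ _
  have hqv_mono : ∀ m ℓ, m ≤ ℓ → qv m ≤ qv ℓ := by
    have hstep : ∀ ℓ, qv ℓ ≤ qv (ℓ + 1) := by
      intro ℓ
      obtain ⟨x, hx⟩ := hqv_ex (ℓ+1)
      rw [← hx]
      calc qv ℓ ≤ cnt ϖ 0 ((ℓ:ℤ)-1) x := hqv_le ℓ x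
        _ ≤ cnt ϖ 0 (((ℓ+1:ℕ):ℤ)-1) x :=
            cnt_mono (le_refl 0) (by push_cast; omega) _ (hfin x)
    intro m ℓ h
    induction ℓ with
    | zero => have : m = 0 := by omega
              rw [this]
    | succ n ih =>
      rcases Nat.lt_or_ge m (n+1) with h' | h'
      · exact le_trans (ih (by omega)) (hstep n)
      · have : m = n + 1 := by omega
        rw [this]
  -- stabilization
  have hbdd : BddAbove (Set.range qv) := ⟨d, by rintro _ ⟨ℓ, rfl⟩; exact hqv_d ℓ⟩
  obtain ⟨ℓ₀, hℓ₀⟩ : ∃ ℓ₀, qv ℓ₀ = sSup (Set.range qv) := by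
    have := Nat.sSup_mem (Set.range_nonempty qv) hbdd
    obtain ⟨ℓ₀, h⟩ := this
    exact ⟨ℓ₀, h⟩
  have hstab : ∀ ℓ, ℓ₀ ≤ ℓ → qv ℓ = qv ℓ₀ := by
    intro ℓ h
    apply le_antisymm
    · rw [hℓ₀]
      exact le_csSup hbdd ⟨ℓ, rfl⟩
    · exact hqv_mono _ _ h
  set L : ℕ := max ℓ₀ (2*n₀ + 4*r + 12) with hLdef
  have hqL : qv L = qv ℓ₀ := hstab L (le_max_left _ _)
  have hLbig : 2*n₀ + 4*r + 12 ≤ L := le_max_right _ _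
  -- magic point
  obtain ⟨xs, hxs⟩ := hqv_ex L
  rw [hqL] at hxs
  obtain ⟨K₀, hTap⟩ := Tap_stab hc L xs
  have hTapcard : (Tap ϖ L K₀ xs).ncard = qv ℓ₀ := by
    rw [hTap]; exact hxs
  have hlow : ∀ (a : ℤ) (x : X.carrier), (Tap ϖ L K₀ xs).ncard ≤ cnt ϖ a (a + L - 1) x := by
    intro a x
    rw [hTapcard, ← hqL]
    exact hqv_low L a x
  -- main claim : d ≤ c
  have hdc : d ≤ qv ℓ₀ := by
    by_contra hlt'
    have hlt : qv ℓ₀ < d := by omega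
    -- transitive point and its fiber
    obtain ⟨xh, hxh⟩ := exists_transitive hXirr hXne
    have hoccA : ∀ T : ℤ, ∃ τ : ℤ, T ≤ τ ∧ ∀ i : ℤ, i.natAbs ≤ K₀ → xh.1 (i + τ) = xs.1 i :=
      fun T => (hxh xs K₀ T).1
    have hoccB : ∀ T : ℤ, ∃ τ : ℤ, τ ≤ T ∧ ∀ i : ℤ, i.natAbs ≤ K₀ → xh.1 (i + τ) = xs.1 i :=
      fun T => (hxh xs K₀ T).2
    have hFfin : (fib ϖ xh).Finite := hfin xh
    haveI := hFfin.to_subtype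
    haveI : Fintype {j : ℤ // j ∈ Finset.Icc (0:ℤ) ((L:ℤ)-1)} := FinsetCoe.fintype _
    haveI := Fintype.ofFinite B
    -- first profile pigeonhole (label windows)
    obtain ⟨P, hP⟩ := cofinal_pigeon
      (g := fun τ : ℤ => fun (y : (fib ϖ xh)) (j : {j : ℤ // j ∈ Finset.Icc (0:ℤ) ((L:ℤ)-1)})
        => y.1.1 (j.1 + τ)) hoccA
    obtain ⟨τ₀, hτ₀T, hτ₀occ, hτ₀P⟩ := hP 0
    -- pigeonhole on the fiber : two points with the same label at τ₀
    obtain ⟨u, hu, v, hv, huv, hmuv⟩ : ∃ u, u ∈ fib ϖ xh ∧ ∃ v, v ∈ fib ϖ xh ∧ u ≠ v ∧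
        mask τ₀ (τ₀ + L - 1) u.1 = mask τ₀ (τ₀ + L - 1) v.1 := by
      have hlabel : (fun y : Y.carrier => mask τ₀ (τ₀ + L - 1) y.1) '' fib ϖ xh
          = maskShift τ₀ '' Tap ϖ L K₀ xs := factA hcm L K₀ xs hTap hlow xh τ₀ hτ₀occ
      have hifin : ((fun y : Y.carrier => mask τ₀ (τ₀ + L - 1) y.1) '' fib ϖ xh).Finite :=
        pimg_finite _ _ _
      have hmap : ∀ y ∈ hFfin.toFinset,
          (fun y : Y.carrier => mask τ₀ (τ₀ + L - 1) y.1) y ∈ hifin.toFinset := by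
        intro y hy
        rw [Set.Finite.mem_toFinset]
        exact ⟨y, hFfin.mem_toFinset.mp hy, rfl⟩
      have hclt : hifin.toFinset.card < hFfin.toFinset.card := by
        rw [← Set.ncard_eq_toFinset_card _ hifin, ← Set.ncard_eq_toFinset_card _ hFfin]
        rw [hcard xh, hlabel, Set.ncard_image_of_injective _ (maskShift_injective τ₀),
          hTapcard]
        exact hlt
      obtain ⟨u, hu, v, hv, hne', heq⟩ :=
        Finset.exists_ne_map_eq_of_card_lt_of_maps_to hclt hmap
      exact ⟨u, hFfin.mem_toFinset.mp hu, v, hFfin.mem_toFinset.mp hv, hne', heq⟩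
    -- agreement of u, v over every family occurrence window
    have hfam : ∀ τ : ℤ,
        ((fun (y : (fib ϖ xh)) (j : {j : ℤ // j ∈ Finset.Icc (0:ℤ) ((L:ℤ)-1)})
          => y.1.1 (j.1 + τ)) = P) →
        ∀ j : ℤ, 0 ≤ j → j ≤ (L:ℤ)-1 → u.1 (j + τ) = v.1 (j + τ) := by
      intro τ hPτ j h1 h2
      have hj : j ∈ Finset.Icc (0:ℤ) ((L:ℤ)-1) := Finset.mem_Icc.mpr ⟨h1, h2⟩
      have e1 := congrFun (congrFun hPτ ⟨u, hu⟩) ⟨j, hj⟩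
      have e2 := congrFun (congrFun hPτ ⟨v, hv⟩) ⟨j, hj⟩
      have e0u := congrFun (congrFun hτ₀P ⟨u, hu⟩) ⟨j, hj⟩
      have e0v := congrFun (congrFun hτ₀P ⟨v, hv⟩) ⟨j, hj⟩
      simp only at e1 e2 e0u e0v
      rw [e1, e2, ← e0u, ← e0v]
      exact mask_eq_iff.mp hmuv (j + τ₀) (by omega) (by omega)
    by_cases hdiff : ∀ T : ℤ, ∃ i : ℤ, T ≤ i ∧ u.1 i ≠ v.1 i
    · -- CASE 1 : differences unbounded above
      have hGex : ∀ T : ℤ, ∃ p : ℤ × ℤ, T ≤ p.1 ∧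
          ((fun (y : (fib ϖ xh)) (j : {j : ℤ // j ∈ Finset.Icc (0:ℤ) ((L:ℤ)-1)})
            => y.1.1 (j.1 + p.1)) = P) ∧
          p.1 + ((n₀:ℤ) + 2*r + 3) ≤ p.2 ∧ u.1 p.2 ≠ v.1 p.2 := by
        intro T
        obtain ⟨τ, hτT, _, hτP⟩ := hP T
        obtain ⟨i, hi1, hi2⟩ := hdiff (τ + ((n₀:ℤ) + 2*r + 3))
        exact ⟨(τ, i), hτT, hτP, hi1, hi2⟩
      choose G hG1 hG2 hG3 hG4 using hGex
      set f : ℕ → ℤ × ℤ := fun n => Nat.rec (G 0) (fun _ p => G (p.2 + 1)) n with hfdef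
      have hfs : ∀ n, f (n+1) = G ((f n).2 + 1) := fun n => rfl
      have hfP : ∀ n, ((fun (y : (fib ϖ xh)) (j : {j : ℤ // j ∈ Finset.Icc (0:ℤ) ((L:ℤ)-1)})
          => y.1.1 (j.1 + (f n).1)) = P) := by
        intro n
        cases n with
        | zero => exact hG2 0
        | succ k => rw [hfs]; exact hG2 _
      have hfsp : ∀ n, (f n).1 + ((n₀:ℤ) + 2*r + 3) ≤ (f n).2 := by
        intro n
        cases n with
        | zero => exact hG3 0
        | succ k => rw [hfs]; exact hG3 _
      have hfd : ∀ n, u.1 (f n).2 ≠ v.1 (f n).2 := by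
        intro n
        cases n with
        | zero => exact hG4 0
        | succ k => rw [hfs]; exact hG4 _
      have hfnext : ∀ n, (f n).2 + 1 ≤ (f (n+1)).1 := by
        intro n; rw [hfs]; exact hG1 _
      have hgrow : ∀ n m : ℕ, n < m → (f n).2 < (f m).1 + ((n₀:ℤ) + 2*r + 3) := by
        intro n m hnm
        induction m with
        | zero => omega
        | succ k ih =>
          rcases Nat.lt_or_ge n k with h' | h'
          · have h1 := ih h'
            have h2 := hfsp k
            have h3 := hfnext k
            omega
          · have : n = k := by omega
            subst this
            have := hfnext n
            omega
      -- the spliced points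
      have hmem : ∀ n : ℕ,
          (fun i => if i < (f n).1 + ((n₀:ℤ) + 2*r + 3) then u.1 i else v.1 i) ∈ Y.carrier := by
        intro n
        apply splice_mem hsft _ u.2 v.2
        intro i hi1 hi2
        have := hfam (f n).1 (hfP n) (i - (f n).1) (by omega) (by omega)
        rw [show i - (f n).1 + (f n).1 = i from by ring] at this
        exact this
      set m : ℕ → Y.carrier := fun n => ⟨_, hmem n⟩ with hmdef
      have hmimg : ∀ n, ϖ (m n) = xh := by
        intro n
        apply Subtype.ext
        funext t
        have hsim := splice_img hr ((f n).1 + ((n₀:ℤ) + 2*r + 3)) u v (m n)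
          (fun i => rfl)
          (by
            intro i hi
            have := hfam (f n).1 (hfP n) (i - (f n).1) (by omega) (by omega)
            rw [show i - (f n).1 + (f n).1 = i from by ring] at this
            exact this) t
        rw [hsim]
        have huimg : ϖ u = xh := hu
        have hvimg : ϖ v = xh := hv
        by_cases ht : t < (f n).1 + ((n₀:ℤ) + 2*r + 3)
        · rw [if_pos ht, huimg]
        · rw [if_neg ht, hvimg]
      -- distinctness
      have hmne : ∀ n k : ℕ, n < k → m n ≠ m k := by
        intro n k hnk heq
        have h1 : (m n).1 (f n).2 = v.1 (f n).2 := by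
          show (if (f n).2 < (f n).1 + ((n₀:ℤ) + 2*r + 3) then u.1 (f n).2 else v.1 (f n).2)
            = v.1 (f n).2
          rw [if_neg (by have := hfsp n; omega)]
        have h2 : (m k).1 (f n).2 = u.1 (f n).2 := by
          show (if (f n).2 < (f k).1 + ((n₀:ℤ) + 2*r + 3) then u.1 (f n).2 else v.1 (f n).2)
            = u.1 (f n).2
          rw [if_pos (hgrow n k hnk)]
        rw [heq] at h1
        rw [h1] at h2
        exact hfd n h2.symm
      exact exceed_card (hfin xh) (fun j : Fin (d+1) => m j.1)
        (fun j => hmimg j.1) (fun j k hjk => hmne j.1 k.1 hjk) (hcard xh)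
    · -- CASE 2 : differences bounded above
      push_neg at hdiff
      obtain ⟨T, hT⟩ := hdiff
      have hdne : ∃ i : ℤ, u.1 i ≠ v.1 i := by
        by_contra hall
        push_neg at hall
        exact huv (Subtype.ext (funext hall))
      obtain ⟨q, hqd, hqmax⟩ := Int.exists_greatest_of_bdd
        (P := fun i : ℤ => u.1 i ≠ v.1 i)
        ⟨T, fun z hz => by
          by_contra hzT
          push_neg at hzT
          exact hz (hT z (by omega))⟩ hdne
      have hqeq : ∀ i : ℤ, q < i → u.1 i = v.1 i := by
        intro i hi'
        by_contra hne'
        have := hqmax i hne'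
        omega
      obtain ⟨t₀, ht₀le, ht₀occ⟩ := hoccB (q - K₀ - L - n₀ - 2*r - 12)
      obtain ⟨t₁, ht₁ge, ht₁occ⟩ := hoccA (q + K₀ + L + n₀ + 2*r + 12)
      set lo : ℤ := t₀ - K₀ - L - (n₀:ℤ) - 2*r - 12 with hlodef
      set hi : ℤ := t₁ + K₀ + L + (n₀:ℤ) + 2*r + 12 with hhidef
      have hRPT : ∀ Tb : ℤ, ∃ δ : ℤ, Tb ≤ δ ∧
          ∀ j : ℤ, lo ≤ j → j ≤ hi → xh.1 (j + δ) = xh.1 j := by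
        intro Tb
        obtain ⟨τ, hτ, hτa⟩ := (hxh (zs X lo xh) ((hi - lo).toNat) (Tb + lo)).1
        refine ⟨τ - lo, by omega, fun j hj1 hj2 => ?_⟩
        have h := hτa (j - lo) (by omega)
        rw [zs_apply] at h
        rw [show j - lo + lo = j from by ring] at h
        rw [show j + (τ - lo) = j - lo + τ from by ring]
        exact h
      haveI : Fintype {j : ℤ // j ∈ Finset.Icc lo hi} := FinsetCoe.fintype _
      obtain ⟨P₂, hP₂⟩ := cofinal_pigeon
        (g := fun δ : ℤ => fun (y : (fib ϖ xh)) (j : {j : ℤ // j ∈ Finset.Icc lo hi})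
          => y.1.1 (j.1 + δ)) hRPT
      have hocc0 : ∀ δ : ℤ, (∀ j : ℤ, lo ≤ j → j ≤ hi → xh.1 (j + δ) = xh.1 j) →
          ∀ i : ℤ, i.natAbs ≤ K₀ → xh.1 (i + (t₀ + δ)) = xs.1 i := by
        intro δ hδ i hi'
        rw [show i + (t₀ + δ) = (i + t₀) + δ from by ring]
        rw [hδ (i + t₀) (by omega) (by omega)]
        exact ht₀occ i hi'
      have hocc1 : ∀ δ : ℤ, (∀ j : ℤ, lo ≤ j → j ≤ hi → xh.1 (j + δ) = xh.1 j) →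
          ∀ i : ℤ, i.natAbs ≤ K₀ → xh.1 (i + (t₁ + δ)) = xs.1 i := by
        intro δ hδ i hi'
        rw [show i + (t₁ + δ) = (i + t₁) + δ from by ring]
        rw [hδ (i + t₁) (by omega) (by omega)]
        exact ht₁occ i hi'
      set pad : ℤ := (n₀:ℤ) + 2*r + 3 with hpaddef
      -- the franken construction
      have hfrank : ∀ (ε : Y.carrier), ϖ ε = xh →
          ∀ δ : ℤ, (∀ j : ℤ, lo ≤ j → j ≤ hi → xh.1 (j + δ) = xh.1 j) →
          ∃ w z2 : Y.carrier, ϖ w = xh ∧ ϖ z2 = xh ∧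
            (∀ i : ℤ, t₀ + pad + δ ≤ i → i < t₁ + pad + δ → w.1 i = ε.1 (i - δ)) ∧
            (∀ i : ℤ, t₁ + pad + δ ≤ i → w.1 i = z2.1 i) ∧
            (∀ j : ℤ, 0 ≤ j → j ≤ (L:ℤ)-1 → z2.1 (j + (t₁ + δ)) = ε.1 (j + t₁)) := by
        intro ε hε δ hδ
        obtain ⟨z1, hz1f, hz1p⟩ := factA_realize hcm L K₀ xs hTap hlow xh (t₀ + δ)
          (hocc0 δ hδ) (zs Y t₀ ε) (by
            intro i hi'
            rw [phi_zs hcm, zs_apply, hε]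
            exact ht₀occ i hi')
        obtain ⟨z2, hz2f, hz2p⟩ := factA_realize hcm L K₀ xs hTap hlow xh (t₁ + δ)
          (hocc1 δ hδ) (zs Y t₁ ε) (by
            intro i hi'
            rw [phi_zs hcm, zs_apply, hε]
            exact ht₁occ i hi')
        have hmidv : ∀ i : ℤ, (zs Y (-δ) ε).1 i = ε.1 (i - δ) := by
          intro i
          rw [zs_apply, show i + -δ = i - δ from by ring]
        have hz1v : ∀ i : ℤ, t₀ + δ ≤ i → i ≤ t₀ + δ + L - 1 → z1.1 i = ε.1 (i - δ) := by
          intro i h1 h2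
          have h := hz1p (i - (t₀ + δ)) (by omega) (by omega)
          rw [show i - (t₀ + δ) + (t₀ + δ) = i from by ring] at h
          rw [h, zs_apply]
          congr 1
          ring
        have hz2v : ∀ i : ℤ, t₁ + δ ≤ i → i ≤ t₁ + δ + L - 1 → z2.1 i = ε.1 (i - δ) := by
          intro i h1 h2
          have h := hz2p (i - (t₁ + δ)) (by omega) (by omega)
          rw [show i - (t₁ + δ) + (t₁ + δ) = i from by ring] at h
          rw [h, zs_apply]
          congr 1
          ring
        have hag1 : ∀ i : ℤ, t₀ + pad + δ ≤ i → i ≤ t₀ + pad + δ + n₀ →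
            z1.1 i = (zs Y (-δ) ε).1 i := by
          intro i h1 h2
          rw [hmidv, hz1v i (by omega) (by omega)]
        have hs1mem := splice_mem hsft (t₀ + pad + δ) z1.2 (zs Y (-δ) ε).2 hag1
        set s1 : Y.carrier := ⟨_, hs1mem⟩ with hs1def
        have hs1v : ∀ i : ℤ, s1.1 i
            = if i < t₀ + pad + δ then z1.1 i else (zs Y (-δ) ε).1 i := fun i => rfl
        have hag2 : ∀ i : ℤ, t₁ + pad + δ ≤ i → i ≤ t₁ + pad + δ + n₀ → s1.1 i = z2.1 i := by
          intro i h1 h2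
          rw [hs1v, if_neg (by omega), hmidv, hz2v i (by omega) (by omega)]
        have hwmem := splice_mem hsft (t₁ + pad + δ) s1.2 z2.2 hag2
        set w : Y.carrier := ⟨_, hwmem⟩ with hwdef
        have hwv : ∀ i : ℤ, w.1 i = if i < t₁ + pad + δ then s1.1 i else z2.1 i :=
          fun i => rfl
        have hwimg : ϖ w = xh := by
          apply Subtype.ext
          funext t
          have hsim2 := splice_img hr (t₁ + pad + δ) s1 z2 w hwv
            (by
              intro i hiR
              rw [hs1v, if_neg (by omega), hmidv, hz2v i (by omega) (by omega)]) t
          rw [hsim2]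
          by_cases ht2 : t < t₁ + pad + δ
          · rw [if_pos ht2]
            have hsim1 := splice_img hr (t₀ + pad + δ) z1 (zs Y (-δ) ε) s1 hs1v
              (by
                intro i hiR
                rw [hmidv, hz1v i (by omega) (by omega)]) t
            rw [hsim1]
            by_cases ht1 : t < t₀ + pad + δ
            · rw [if_pos ht1, hz1f]
            · rw [if_neg ht1]
              rw [phi_zs hcm, zs_apply, hε]
              have hb := hδ (t - δ) (by omega) (by omega)
              rw [show t - δ + δ = t from by ring] at hb
              rw [show t + -δ = t - δ from by ring]
              exact hb.symm
          · rw [if_neg ht2, hz2f]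
        refine ⟨w, z2, hwimg, hz2f, ?_, ?_, ?_⟩
        · intro i h1 h2
          rw [hwv, if_pos h2, hs1v, if_neg (by omega)]
          exact hmidv i
        · intro i h1
          rw [hwv, if_neg (by omega)]
        · intro j h1 h2
          exact hz2p j h1 h2
      -- fix the first block occurrence δ1
      obtain ⟨δ1, hδ1T, hδ1R, hδ1P⟩ := hP₂ 0
      obtain ⟨wu, pu, hwuimg, hpuimg, hwumid, hwutail, hpup⟩ := hfrank u hu δ1 hδ1R
      obtain ⟨wv, pv, hwvimg, hpvimg, hwvmid, hwvtail, hpvp⟩ := hfrank v hv δ1 hδ1R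
      set GAP : ℤ := (hi - lo) + (t₁ + pad - lo) + L + (n₀:ℤ) + 9 with hGAPdef
      have hGAP0 : 0 ≤ GAP := by omega
      -- forced constancy
      have hconst : ∀ (wε pε : Y.carrier), ϖ wε = xh →
          (∀ i : ℤ, t₁ + pad + δ1 ≤ i → wε.1 i = pε.1 i) →
          ∀ δ : ℤ, ((fun (y : (fib ϖ xh)) (j : {j : ℤ // j ∈ Finset.Icc lo hi})
            => y.1.1 (j.1 + δ)) = P₂) → δ1 + GAP ≤ δ →
          ∀ j : ℤ, lo ≤ j → j ≤ hi → pε.1 (j + δ) = wε.1 (j + δ1) := by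
        intro wε pε hwimg htail δ hPδ hδge j hj1 hj2
        have hjm : j ∈ Finset.Icc lo hi := Finset.mem_Icc.mpr ⟨hj1, hj2⟩
        have hwmem : wε ∈ fib ϖ xh := hwimg
        have e1 := congrFun (congrFun hPδ ⟨wε, hwmem⟩) ⟨j, hjm⟩
        have e2 := congrFun (congrFun hδ1P ⟨wε, hwmem⟩) ⟨j, hjm⟩
        simp only at e1 e2
        rw [← htail (j + δ) (by omega), e1, ← e2]
      have hpatu : ∀ δ : ℤ, ((fun (y : (fib ϖ xh)) (j : {j : ℤ // j ∈ Finset.Icc lo hi})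
            => y.1.1 (j.1 + δ)) = P₂) → δ1 + GAP ≤ δ →
          ∀ j : ℤ, lo ≤ j → j ≤ hi → pu.1 (j + δ) = wu.1 (j + δ1) :=
        fun δ h1 h2 j hj1 hj2 => hconst wu pu hwuimg hwutail δ h1 h2 j hj1 hj2
      have hpatv : ∀ δ : ℤ, ((fun (y : (fib ϖ xh)) (j : {j : ℤ // j ∈ Finset.Icc lo hi})
            => y.1.1 (j.1 + δ)) = P₂) → δ1 + GAP ≤ δ →
          ∀ j : ℤ, lo ≤ j → j ≤ hi → pv.1 (j + δ) = wv.1 (j + δ1) :=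
        fun δ h1 h2 j hj1 hj2 => hconst wv pv hwvimg hwvtail δ h1 h2 j hj1 hj2
      -- pattern values
      have hpatuq : wu.1 (q + δ1) = u.1 q := by
        rw [hwumid (q + δ1) (by omega) (by omega)]
        congr 1
        ring
      have hpatvq : wv.1 (q + δ1) = v.1 q := by
        rw [hwvmid (q + δ1) (by omega) (by omega)]
        congr 1
        ring
      have hpatuexit : ∀ j : ℤ, t₁ ≤ j → j ≤ t₁ + L - 1 → wu.1 (j + δ1) = u.1 j := by
        intro j h1 h2
        by_cases hj : j + δ1 < t₁ + pad + δ1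
        · rw [hwumid (j + δ1) (by omega) (by omega)]
          congr 1
          ring
        · rw [hwutail (j + δ1) (by omega)]
          rw [show j + δ1 = (j - t₁) + (t₁ + δ1) from by ring]
          rw [hpup (j - t₁) (by omega) (by omega)]
          congr 1
          ring
      have hpatvexit : ∀ j : ℤ, t₁ ≤ j → j ≤ t₁ + L - 1 → wv.1 (j + δ1) = v.1 j := by
        intro j h1 h2
        by_cases hj : j + δ1 < t₁ + pad + δ1
        · rw [hwvmid (j + δ1) (by omega) (by omega)]
          congr 1
          ring
        · rw [hwvtail (j + δ1) (by omega)]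
          rw [show j + δ1 = (j - t₁) + (t₁ + δ1) from by ring]
          rw [hpvp (j - t₁) (by omega) (by omega)]
          congr 1
          ring
      have hpatexit : ∀ j : ℤ, t₁ ≤ j → j ≤ t₁ + L - 1 → wu.1 (j + δ1) = wv.1 (j + δ1) := by
        intro j h1 h2
        rw [hpatuexit j h1 h2, hpatvexit j h1 h2]
        exact hqeq j (by omega)
      -- the sequence of block occurrences
      have hDex : ∀ Tb : ℤ, ∃ δ : ℤ, Tb ≤ δ ∧
          ((fun (y : (fib ϖ xh)) (j : {j : ℤ // j ∈ Finset.Icc lo hi})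
            => y.1.1 (j.1 + δ)) = P₂) ∧ δ1 + GAP ≤ δ := by
        intro Tb
        obtain ⟨δ, h1, _, h3⟩ := hP₂ (max Tb (δ1 + GAP))
        exact ⟨δ, le_trans (le_max_left _ _) h1, h3, le_trans (le_max_right _ _) h1⟩
      choose Dn hD1 hD2 hD3 using hDex
      set g2 : ℕ → ℤ := fun n => Nat.rec (Dn 0) (fun _ δ => Dn (δ + GAP + 1)) n with hg2def
      have hg2s : ∀ n, g2 (n+1) = Dn (g2 n + GAP + 1) := fun n => rfl
      have hg2P : ∀ n, ((fun (y : (fib ϖ xh)) (j : {j : ℤ // j ∈ Finset.Icc lo hi})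
            => y.1.1 (j.1 + g2 n)) = P₂) ∧ δ1 + GAP ≤ g2 n := by
        intro n
        cases n with
        | zero => exact ⟨hD2 0, hD3 0⟩
        | succ k => rw [hg2s]; exact ⟨hD2 _, hD3 _⟩
      have hg2next : ∀ n, g2 n + GAP + 1 ≤ g2 (n+1) := by
        intro n
        rw [hg2s]
        exact hD1 _
      have hg2grow : ∀ n k : ℕ, n < k → g2 n + GAP + 1 ≤ g2 k := by
        intro n k hnk
        induction k with
        | zero => omega
        | succ j ih =>
          rcases Nat.lt_or_ge n j with h' | h'
          · have h1 := ih h'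
            have h2 := hg2next j
            omega
          · have : n = j := by omega
            subst this
            exact hg2next n
      -- the spliced witnesses
      have hmmem : ∀ k : ℕ,
          (fun i => if i < t₁ + pad + g2 k then pu.1 i else pv.1 i) ∈ Y.carrier := by
        intro k
        apply splice_mem hsft _ pu.2 pv.2
        intro i hi1 hi2
        have hu' := hpatu (g2 k) (hg2P k).1 (hg2P k).2 (i - g2 k) (by omega) (by omega)
        have hv' := hpatv (g2 k) (hg2P k).1 (hg2P k).2 (i - g2 k) (by omega) (by omega)
        rw [show i - g2 k + g2 k = i from by ring] at hu' hv'
        rw [hu', hv']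
        exact hpatexit (i - g2 k) (by omega) (by omega)
      set mm : ℕ → Y.carrier := fun k => ⟨_, hmmem k⟩ with hmmdef
      have hmmimg : ∀ k, ϖ (mm k) = xh := by
        intro k
        apply Subtype.ext
        funext t
        have hsim := splice_img hr (t₁ + pad + g2 k) pu pv (mm k) (fun i => rfl)
          (by
            intro i hiR
            have hu' := hpatu (g2 k) (hg2P k).1 (hg2P k).2 (i - g2 k) (by omega) (by omega)
            have hv' := hpatv (g2 k) (hg2P k).1 (hg2P k).2 (i - g2 k) (by omega) (by omega)
            rw [show i - g2 k + g2 k = i from by ring] at hu' hv'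
            rw [hu', hv']
            exact hpatexit (i - g2 k) (by omega) (by omega)) t
        rw [hsim]
        by_cases ht : t < t₁ + pad + g2 k
        · rw [if_pos ht, hpuimg]
        · rw [if_neg ht, hpvimg]
      have hmmne : ∀ n k : ℕ, n < k → mm n ≠ mm k := by
        intro n k hnk heq
        have hgap := hg2grow n k hnk
        have h1 : (mm n).1 (q + g2 k) = pv.1 (q + g2 k) := by
          show (if q + g2 k < t₁ + pad + g2 n then pu.1 (q + g2 k) else pv.1 (q + g2 k))
            = pv.1 (q + g2 k)
          rw [if_neg (by omega)]
        have h2 : (mm k).1 (q + g2 k) = pu.1 (q + g2 k) := by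
          show (if q + g2 k < t₁ + pad + g2 k then pu.1 (q + g2 k) else pv.1 (q + g2 k))
            = pu.1 (q + g2 k)
          rw [if_pos (by omega)]
        have h3 := hpatu (g2 k) (hg2P k).1 (hg2P k).2 q (by omega) (by omega)
        have h4 := hpatv (g2 k) (hg2P k).1 (hg2P k).2 q (by omega) (by omega)
        rw [heq] at h1
        rw [h2] at h1
        rw [h3, h4] at h1
        rw [hpatuq, hpatvq] at h1
        exact hqd h1
      exact exceed_card (hfin xh) (fun j : Fin (d+1) => mm j.1)
        (fun j => hmmimg j.1) (fun j k hjk => hmmne j.1 k.1 hjk) (hcard xh)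


  -- conclusion : L is a separation constant
  have hcd : qv ℓ₀ ≤ d := hqv_d ℓ₀
  refine ⟨L, fun z w hzw hag => ?_⟩
  by_contra hzwne
  set x := ϖ w with hx
  have hzf : z ∈ fib ϖ x := by
    show ϖ z = x
    rw [hzw]
  have hwf : w ∈ fib ϖ x := rfl
  have hcnt_eq : cnt ϖ 0 ((L:ℤ)-1) x = d := by
    apply le_antisymm (hcnt_le _ _ _)
    have h1 := hqv_low L 0 x
    rw [zero_add, hqL] at h1
    omega
  have hmask : mask 0 ((L:ℤ)-1) z.1 = mask 0 ((L:ℤ)-1) w.1 :=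
    mask_eq_iff.mpr (fun i h1 h2 => hag i (by omega))
  have hsub : (fun y : Y.carrier => mask 0 ((L:ℤ)-1) y.1) '' fib ϖ x
      ⊆ (fun y : Y.carrier => mask 0 ((L:ℤ)-1) y.1) '' (fib ϖ x \ {w}) := by
    rintro _ ⟨y, hy, rfl⟩
    by_cases hyw : y = w
    · refine ⟨z, ⟨hzf, by simp [hzwne]⟩, ?_⟩
      simp only
      rw [hyw, ← hmask]
    · exact ⟨y, ⟨hy, by simp [hyw]⟩, rfl⟩
  have h1 : cnt ϖ 0 ((L:ℤ)-1) x ≤ (fib ϖ x \ {w}).ncard := by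
    refine le_trans (Set.ncard_le_ncard hsub (pimg_finite _ _ _)) ?_
    exact Set.ncard_image_le ((hfin x).diff)
  have h2 : (fib ϖ x \ {w}).ncard < d := by
    rw [← hcard x]
    exact Set.ncard_diff_singleton_lt_of_mem hwf (hfin x)
  omega

end Key
end Rigid

/-- Rigidity: a relative automorphism of an unramified factor map between irreducible
SFTs which fixes a point is the identity; consequently the natural action of
`Aut(Y/X, ϖ)` on each fiber is free. -/
theorem stmt_4 {A B : Type*} [TopologicalSpace A] [DiscreteTopology A] [Finite A]
    [TopologicalSpace B] [DiscreteTopology B] [Finite B]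
    (X : Subshift A) (Y : Subshift B)
    (hXsft : X.IsSFT) (hXirr : X.Irreducible) (hYsft : Y.IsSFT) (hYirr : Y.Irreducible)
    (ϖ : Y.carrier → X.carrier) (d : ℕ) (hϖ : IsUnramified Y X ϖ d) :
    (∀ φ ∈ relAut Y X ϖ, (∃ y : Y.carrier, φ y = y) → φ = 1) ∧
      ∀ (x : X.carrier) (φ : Equiv.Perm Y.carrier), φ ∈ relAut Y X ϖ →
        ∀ y ∈ ϖ ⁻¹' {x}, φ y = y → φ = 1 := by
  classical
  have main : ∀ φ ∈ relAut Y X ϖ, (∃ y : Y.carrier, φ y = y) → φ = 1 := by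
    rintro φ hφ ⟨y₀, hy₀⟩
    obtain ⟨hφc, hφci, hφcomm, hφrel⟩ := hφ
    haveI hne : Nonempty Y.carrier := ⟨y₀⟩
    obtain ⟨n₀, W, hsft⟩ := hYsft
    obtain ⟨N, hN⟩ := Rigid.key_sep hXirr hsft hϖ.1.continuous hϖ.1.commutes
      hϖ.1.surjective d hϖ.2 hne
    set Fx : Set Y.carrier := {y | φ y = y} with hFx
    set V : Set Y.carrier := {z | (∀ i : ℤ, i.natAbs ≤ N → z.1 i = y₀.1 i) ∧
      (∀ i : ℤ, i.natAbs ≤ N → (φ z).1 i = y₀.1 i)} with hV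
    have hVopen : IsOpen V := by
      have h1 : IsOpen {z : Y.carrier | ∀ i : ℤ, i.natAbs ≤ N → z.1 i = y₀.1 i} := by
        have he : {z : Y.carrier | ∀ i : ℤ, i.natAbs ≤ N → z.1 i = y₀.1 i}
            = ⋂ i ∈ Finset.Icc (-(N:ℤ)) (N:ℤ), {z : Y.carrier | z.1 i = y₀.1 i} := by
          ext z
          simp only [Set.mem_setOf_eq, Set.mem_iInter, Finset.mem_Icc]
          constructor
          · intro h i hi
            exact h i (by omega)
          · intro h i hi
            exact h i (by omega)
        rw [he]
        apply isOpen_biInter_finset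
        intro i _
        exact (isOpen_discrete {y₀.1 i}).preimage (Rigid.continuous_coord Y i)
      have h2 : IsOpen {z : Y.carrier | ∀ i : ℤ, i.natAbs ≤ N → (φ z).1 i = y₀.1 i} := by
        have he : {z : Y.carrier | ∀ i : ℤ, i.natAbs ≤ N → (φ z).1 i = y₀.1 i}
            = φ ⁻¹' {z : Y.carrier | ∀ i : ℤ, i.natAbs ≤ N → z.1 i = y₀.1 i} := rfl
        rw [he]
        apply IsOpen.preimage hφc
        have he2 : {z : Y.carrier | ∀ i : ℤ, i.natAbs ≤ N → z.1 i = y₀.1 i}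
            = ⋂ i ∈ Finset.Icc (-(N:ℤ)) (N:ℤ), {z : Y.carrier | z.1 i = y₀.1 i} := by
          ext z
          simp only [Set.mem_setOf_eq, Set.mem_iInter, Finset.mem_Icc]
          constructor
          · intro h i hi
            exact h i (by omega)
          · intro h i hi
            exact h i (by omega)
        rw [he2]
        apply isOpen_biInter_finset
        intro i _
        exact (isOpen_discrete {y₀.1 i}).preimage (Rigid.continuous_coord Y i)
      exact h1.inter h2
    have hVy₀ : y₀ ∈ V := by
      refine ⟨fun i _ => rfl, fun i _ => ?_⟩
      rw [hy₀]
    have hVFix : V ⊆ Fx := by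
      rintro z ⟨h1, h2⟩
      exact hN (φ z) z (hφrel z) (fun i hi => by rw [h2 i hi, h1 i hi])
    by_contra hφne
    have hcompl : Fxᶜ.Nonempty := by
      rw [Set.nonempty_compl]
      intro hFxuniv
      apply hφne
      apply Equiv.ext
      intro y
      have hy : y ∈ Fx := by rw [hFxuniv]; trivial
      simpa [hFx] using hy
    have hcopen : IsOpen Fxᶜ := (isClosed_eq hφc continuous_id).isOpen_compl
    obtain ⟨n, hinter⟩ := hYirr V Fxᶜ hVopen hcopen ⟨y₀, hVy₀⟩ hcompl
    obtain ⟨z, hz1, hz2⟩ := hinter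
    obtain ⟨z', hz'V, rfl⟩ := hz1
    -- z = σ^[n] z' with z' ∈ Fx, so z ∈ Fx, contradicting hz2
    have hz'Fx : z' ∈ Fx := hVFix hz'V
    have hiter : ∀ m : ℕ, Y.σ^[m] z' ∈ Fx := by
      intro m
      induction m with
      | zero => exact hz'Fx
      | succ k ih =>
        rw [Function.iterate_succ_apply']
        show φ (Y.σ (Y.σ^[k] z')) = Y.σ (Y.σ^[k] z')
        rw [hφcomm]
        have : φ (Y.σ^[k] z') = Y.σ^[k] z' := ih
        rw [this]
    exact hz2 (hiter n)
  exact ⟨main, fun x φ hφ y _ hfix => main φ hφ ⟨y, hfix⟩⟩
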